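/- For a Hermitian matrix A ∈ Herm(n), the eigenvalues of the top-left k×k principal submatrix interlace those of the top-left (k+1)×(k+1) principal submatrix: if λ^(k)_1 ≤ ... ≤ λ^(k)_k and λ^(k+1)_1 ≤ ... ≤ λ^(k+1)_{k+1} are the respective ordered eigenvalues, then λ^(k+1)_i ≤ λ^(k)_i ≤ λ^(k+1)_{i+1} for all 1 ≤ i ≤ k. -/

import Mathlib

open Matrix


section CauchyAux

variable {m : ℕ} {B : Matrix (Fin m) (Fin m) ℂ} (hB : B.IsHermitian)

private lemma repr_toEuclideanLin (x : EuclideanSpace ℂ (Fin m)) (j : Fin m) :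
    hB.eigenvectorBasis.repr (toEuclideanLin B x) j
      = hB.eigenvalues j * hB.eigenvectorBasis.repr x j := by
  have hsym := (isHermitian_iff_isSymmetric.1 hB)
  rw [OrthonormalBasis.repr_apply_apply, OrthonormalBasis.repr_apply_apply,
    ← hsym (hB.eigenvectorBasis j) x]
  have hTb : toEuclideanLin B (hB.eigenvectorBasis j)
      = (hB.eigenvalues j : ℂ) • hB.eigenvectorBasis j := by
    apply PiLp.ext
    intro i
    have := congrFun (hB.mulVec_eigenvectorBasis j) i
    simpa [toEuclideanLin_apply] using this
  rw [hTb, inner_smul_left]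
  simp [mul_comm]

private lemma quad_formula (x : EuclideanSpace ℂ (Fin m)) :
    RCLike.re (inner ℂ x (toEuclideanLin B x) : ℂ)
      = ∑ j, hB.eigenvalues j * ‖hB.eigenvectorBasis.repr x j‖ ^ 2 := by
  have h1 : (inner ℂ x (toEuclideanLin B x) : ℂ)
      = inner ℂ (hB.eigenvectorBasis.repr x) (hB.eigenvectorBasis.repr (toEuclideanLin B x)) :=
    (hB.eigenvectorBasis.repr.inner_map_map x _).symm
  rw [h1, PiLp.inner_apply]
  rw [map_sum]
  congr 1
  funext j
  rw [repr_toEuclideanLin hB x j]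
  have : (inner ℂ (hB.eigenvectorBasis.repr x j) (hB.eigenvalues j * hB.eigenvectorBasis.repr x j) : ℂ)
      = (hB.eigenvalues j : ℂ) * (starRingEnd ℂ (hB.eigenvectorBasis.repr x j) * hB.eigenvectorBasis.repr x j) := by
    simp [RCLike.inner_apply]; ring
  rw [this]
  rw [RCLike.conj_mul]
  simp [RCLike.mul_re, ← Complex.ofReal_pow]

private lemma normsq_formula (x : EuclideanSpace ℂ (Fin m)) :
    ‖x‖ ^ 2 = ∑ j, ‖hB.eigenvectorBasis.repr x j‖ ^ 2 := by
  rw [← hB.eigenvectorBasis.repr.norm_map x, EuclideanSpace.norm_eq]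
  rw [Real.sq_sqrt (by positivity)]

private lemma repr_vanish (S : Finset (Fin m)) {x : EuclideanSpace ℂ (Fin m)}
    (hx : x ∈ Submodule.span ℂ (hB.eigenvectorBasis '' ↑S)) {j : Fin m} (hj : j ∉ S) :
    hB.eigenvectorBasis.repr x j = 0 := by
  rw [OrthonormalBasis.repr_apply_apply]
  induction hx using Submodule.span_induction with
  | mem v hv =>
    obtain ⟨i, hi, rfl⟩ := hv
    exact hB.eigenvectorBasis.orthonormal.2 (by rintro rfl; exact hj hi)
  | zero => simp
  | add u v _ _ hu hv => rw [inner_add_right, hu, hv, add_zero]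
  | smul c v _ hv => rw [inner_smul_right, hv, mul_zero]

private lemma quad_le (S : Finset (Fin m)) (c : ℝ) (hc : ∀ j ∈ S, hB.eigenvalues j ≤ c)
    {x : EuclideanSpace ℂ (Fin m)} (hx : x ∈ Submodule.span ℂ (hB.eigenvectorBasis '' ↑S)) :
    RCLike.re (inner ℂ x (toEuclideanLin B x) : ℂ) ≤ c * ‖x‖ ^ 2 := by
  rw [quad_formula hB, normsq_formula hB, Finset.mul_sum]
  refine Finset.sum_le_sum fun j _ => ?_
  by_cases hj : j ∈ S
  · exact mul_le_mul_of_nonneg_right (hc j hj) (by positivity)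
  · rw [repr_vanish hB S hx hj]; simp

private lemma quad_ge (S : Finset (Fin m)) (c : ℝ) (hc : ∀ j ∈ S, c ≤ hB.eigenvalues j)
    {x : EuclideanSpace ℂ (Fin m)} (hx : x ∈ Submodule.span ℂ (hB.eigenvectorBasis '' ↑S)) :
    c * ‖x‖ ^ 2 ≤ RCLike.re (inner ℂ x (toEuclideanLin B x) : ℂ) := by
  rw [quad_formula hB, normsq_formula hB, Finset.mul_sum]
  refine Finset.sum_le_sum fun j _ => ?_
  by_cases hj : j ∈ S
  · exact mul_le_mul_of_nonneg_right (hc j hj) (by positivity)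
  · rw [repr_vanish hB S hx hj]; simp

private lemma span_finrank (S : Finset (Fin m)) :
    Module.finrank ℂ (Submodule.span ℂ (hB.eigenvectorBasis '' ↑S)) = S.card := by
  have himg : hB.eigenvectorBasis '' ↑S = Set.range (fun j : S => hB.eigenvectorBasis j) :=
    Set.image_eq_range _ _
  rw [himg]
  rw [finrank_span_eq_card (ι := S) (b := fun j : S => hB.eigenvectorBasis j)
    (hB.eigenvectorBasis.orthonormal.linearIndependent.comp Subtype.val Subtype.val_injective)]
  simp

end CauchyAux

private noncomputable def embL (k : ℕ) :
    EuclideanSpace ℂ (Fin k) →ₗ[ℂ] EuclideanSpace ℂ (Fin (k + 1)) where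
  toFun x := WithLp.toLp 2 (fun j => if h : (j : ℕ) < k then x ⟨j, h⟩ else 0)
  map_add' x y := by
    ext j
    by_cases h : (j : ℕ) < k <;> simp [h, PiLp.add_apply]
  map_smul' c x := by
    ext j
    by_cases h : (j : ℕ) < k <;> simp [h, PiLp.smul_apply]

private lemma embL_castSucc {k : ℕ} (x : EuclideanSpace ℂ (Fin k)) (i : Fin k) :
    embL k x (Fin.castSucc i) = x i := by
  simp [embL]

private lemma embL_last {k : ℕ} (x : EuclideanSpace ℂ (Fin k)) :
    embL k x (Fin.last k) = 0 := by
  simp [embL]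

private lemma embL_injective (k : ℕ) : Function.Injective (embL k) := by
  intro x y h
  apply PiLp.ext
  intro i
  have := congrFun congr(⇑$h) (Fin.castSucc i)
  simpa [embL_castSucc] using this

private lemma embL_inner {k : ℕ} (x y : EuclideanSpace ℂ (Fin k)) :
    (inner ℂ (embL k x) (embL k y) : ℂ) = inner ℂ x y := by
  rw [PiLp.inner_apply, PiLp.inner_apply, Fin.sum_univ_castSucc]
  simp [embL_castSucc, embL_last]

private lemma embL_norm {k : ℕ} (x : EuclideanSpace ℂ (Fin k)) : ‖embL k x‖ = ‖x‖ := by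
  have h1 := norm_sq_eq_re_inner (𝕜 := ℂ) (embL k x)
  have h2 := norm_sq_eq_re_inner (𝕜 := ℂ) x
  rw [embL_inner] at h1
  nlinarith [norm_nonneg (embL k x), norm_nonneg x]

private lemma embL_quad {k : ℕ} (B : Matrix (Fin (k + 1)) (Fin (k + 1)) ℂ)
    (x : EuclideanSpace ℂ (Fin k)) :
    (inner ℂ (embL k x) (toEuclideanLin B (embL k x)) : ℂ)
      = inner ℂ x (toEuclideanLin (B.submatrix Fin.castSucc Fin.castSucc) x) := by
  rw [PiLp.inner_apply, PiLp.inner_apply, Fin.sum_univ_castSucc]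
  have hmul : ∀ i : Fin k, (toEuclideanLin B (embL k x)) (Fin.castSucc i)
      = (toEuclideanLin (B.submatrix Fin.castSucc Fin.castSucc) x) i := by
    intro i
    simp only [toEuclideanLin_apply, mulVec, dotProduct,
      submatrix_apply]
    rw [Fin.sum_univ_castSucc]
    simp [embL_castSucc, embL_last]
  simp [embL_castSucc, embL_last, hmul]

/-- Key dimension-counting lemma: if `S1` indexes eigenvalues of the principal submatrix `C`
that are all `≥ a`, `S2` indexes eigenvalues of `B` that are all `≤ b`, and the cardinalities
are large enough, then `a ≤ b`. -/
private lemma key_ge_le {k : ℕ} {B : Matrix (Fin (k + 1)) (Fin (k + 1)) ℂ} (hB : B.IsHermitian)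
    (hC : (B.submatrix Fin.castSucc Fin.castSucc).IsHermitian)
    (S1 : Finset (Fin k)) (S2 : Finset (Fin (k + 1)))
    (hcard : k + 2 ≤ S1.card + S2.card) (a b : ℝ)
    (h1 : ∀ j ∈ S1, a ≤ hC.eigenvalues j)
    (h2 : ∀ j ∈ S2, hB.eigenvalues j ≤ b) : a ≤ b := by
  classical
  set W1 : Submodule ℂ (EuclideanSpace ℂ (Fin (k + 1))) :=
    (Submodule.span ℂ (hC.eigenvectorBasis '' ↑S1)).map (embL k) with hW1
  set W2 : Submodule ℂ (EuclideanSpace ℂ (Fin (k + 1))) :=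
    Submodule.span ℂ (hB.eigenvectorBasis '' ↑S2) with hW2
  have hr1 : Module.finrank ℂ W1 = S1.card := by
    rw [hW1, ← LinearEquiv.finrank_eq
      (Submodule.equivMapOfInjective (embL k) (embL_injective k) _), span_finrank]
  have hr2 : Module.finrank ℂ W2 = S2.card := span_finrank hB S2
  have hinf : 0 < Module.finrank ℂ (W1 ⊓ W2 : Submodule ℂ (EuclideanSpace ℂ (Fin (k + 1)))) := by
    have hsum := Submodule.finrank_sup_add_finrank_inf_eq W1 W2
    have hle : Module.finrank ℂ (W1 ⊔ W2 : Submodule ℂ (EuclideanSpace ℂ (Fin (k + 1))))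
        ≤ k + 1 := by
      have := Submodule.finrank_le (W1 ⊔ W2)
      rwa [finrank_euclideanSpace, Fintype.card_fin] at this
    omega
  have hne : (W1 ⊓ W2 : Submodule ℂ (EuclideanSpace ℂ (Fin (k + 1)))) ≠ ⊥ := by
    intro h
    rw [h, finrank_bot] at hinf
    omega
  obtain ⟨x, hx, hx0⟩ := Submodule.exists_mem_ne_zero_of_ne_bot hne
  obtain ⟨hxW1, hxW2⟩ := hx
  obtain ⟨y, hy, rfl⟩ := hxW1
  have hy0 : y ≠ 0 := fun h => hx0 (by rw [h, map_zero])
  have hnorm : (0:ℝ) < ‖y‖ ^ 2 := pow_pos (norm_pos_iff.mpr hy0) 2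
  have hlow : a * ‖y‖ ^ 2 ≤ RCLike.re (inner ℂ y (toEuclideanLin
      (B.submatrix Fin.castSucc Fin.castSucc) y) : ℂ) := quad_ge hC S1 a h1 hy
  have hup : RCLike.re (inner ℂ (embL k y) (toEuclideanLin B (embL k y)) : ℂ)
      ≤ b * ‖embL k y‖ ^ 2 := quad_le hB S2 b h2 hxW2
  rw [embL_quad, embL_norm] at hup
  have : a * ‖y‖ ^ 2 ≤ b * ‖y‖ ^ 2 := le_trans hlow hup
  exact le_of_mul_le_mul_right (by linarith [this]) hnorm

private lemma key_le_ge {k : ℕ} {B : Matrix (Fin (k + 1)) (Fin (k + 1)) ℂ} (hB : B.IsHermitian)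
    (hC : (B.submatrix Fin.castSucc Fin.castSucc).IsHermitian)
    (S1 : Finset (Fin k)) (S2 : Finset (Fin (k + 1)))
    (hcard : k + 2 ≤ S1.card + S2.card) (a b : ℝ)
    (h1 : ∀ j ∈ S1, hC.eigenvalues j ≤ b)
    (h2 : ∀ j ∈ S2, a ≤ hB.eigenvalues j) : a ≤ b := by
  classical
  set W1 : Submodule ℂ (EuclideanSpace ℂ (Fin (k + 1))) :=
    (Submodule.span ℂ (hC.eigenvectorBasis '' ↑S1)).map (embL k) with hW1
  set W2 : Submodule ℂ (EuclideanSpace ℂ (Fin (k + 1))) :=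
    Submodule.span ℂ (hB.eigenvectorBasis '' ↑S2) with hW2
  have hr1 : Module.finrank ℂ W1 = S1.card := by
    rw [hW1, ← LinearEquiv.finrank_eq
      (Submodule.equivMapOfInjective (embL k) (embL_injective k) _), span_finrank]
  have hr2 : Module.finrank ℂ W2 = S2.card := span_finrank hB S2
  have hinf : 0 < Module.finrank ℂ (W1 ⊓ W2 : Submodule ℂ (EuclideanSpace ℂ (Fin (k + 1)))) := by
    have hsum := Submodule.finrank_sup_add_finrank_inf_eq W1 W2
    have hle : Module.finrank ℂ (W1 ⊔ W2 : Submodule ℂ (EuclideanSpace ℂ (Fin (k + 1))))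
        ≤ k + 1 := by
      have := Submodule.finrank_le (W1 ⊔ W2)
      rwa [finrank_euclideanSpace, Fintype.card_fin] at this
    omega
  have hne : (W1 ⊓ W2 : Submodule ℂ (EuclideanSpace ℂ (Fin (k + 1)))) ≠ ⊥ := by
    intro h
    rw [h, finrank_bot] at hinf
    omega
  obtain ⟨x, hx, hx0⟩ := Submodule.exists_mem_ne_zero_of_ne_bot hne
  obtain ⟨hxW1, hxW2⟩ := hx
  obtain ⟨y, hy, rfl⟩ := hxW1
  have hy0 : y ≠ 0 := fun h => hx0 (by rw [h, map_zero])
  have hnorm : (0:ℝ) < ‖y‖ ^ 2 := pow_pos (norm_pos_iff.mpr hy0) 2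
  have hup : RCLike.re (inner ℂ y (toEuclideanLin
      (B.submatrix Fin.castSucc Fin.castSucc) y) : ℂ) ≤ b * ‖y‖ ^ 2 := quad_le hC S1 b h1 hy
  have hlow : a * ‖embL k y‖ ^ 2
      ≤ RCLike.re (inner ℂ (embL k y) (toEuclideanLin B (embL k y)) : ℂ) := quad_ge hB S2 a h2 hxW2
  rw [embL_quad, embL_norm] at hlow
  have : a * ‖y‖ ^ 2 ≤ b * ‖y‖ ^ 2 := le_trans hlow hup
  exact le_of_mul_le_mul_right (by linarith [this]) hnorm

/-- Cauchy interlacing: for a Hermitian matrix `A`, the ordered eigenvalues of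
the top-left `k × k` principal submatrix interlace those of the top-left
`(k + 1) × (k + 1)` principal submatrix. -/
theorem cauchy_interlacing (n k : ℕ) (hk : k + 1 ≤ n)
    (A : Matrix (Fin n) (Fin n) ℂ) (hA : A.IsHermitian)
    (μ : Fin k → ℝ) (ν : Fin (k + 1) → ℝ)
    (σ : Equiv.Perm (Fin k)) (τ : Equiv.Perm (Fin (k + 1)))
    (hμmono : Monotone μ) (hνmono : Monotone ν)
    (hμ : μ = (hA.submatrix (Fin.castLE (Nat.le_of_succ_le hk))).eigenvalues ∘ σ)
    (hν : ν = (hA.submatrix (Fin.castLE hk)).eigenvalues ∘ τ) :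
    ∀ i : Fin k, ν (Fin.castSucc i) ≤ μ i ∧ μ i ≤ ν (Fin.succ i) := by
  classical
  intro i
  have hB := hA.submatrix (Fin.castLE hk)
  have hC : ((A.submatrix (Fin.castLE hk) (Fin.castLE hk)).submatrix
      Fin.castSucc Fin.castSucc).IsHermitian := hA.submatrix (Fin.castLE (Nat.le_of_succ_le hk))
  have hμ' : ∀ a : Fin k, hC.eigenvalues (σ a) = μ a := fun a => (congrFun hμ a).symm
  have hν' : ∀ a : Fin (k + 1), hB.eigenvalues (τ a) = ν a := fun a => (congrFun hν a).symm
  constructor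
  · -- ν (castSucc i) ≤ μ i
    refine key_le_ge hB hC ((Finset.Iic i).image σ) ((Finset.Ici (Fin.castSucc i)).image τ)
      ?_ _ _ ?_ ?_
    · rw [Finset.card_image_of_injective _ σ.injective,
        Finset.card_image_of_injective _ τ.injective, Fin.card_Iic, Fin.card_Ici]
      have := i.isLt
      simp only [Fin.coe_castSucc]
      omega
    · intro j hj
      obtain ⟨a, ha, rfl⟩ := Finset.mem_image.1 hj
      rw [hμ' a]
      exact hμmono (Finset.mem_Iic.1 ha)
    · intro j hj
      obtain ⟨a, ha, rfl⟩ := Finset.mem_image.1 hj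
      rw [hν' a]
      exact hνmono (Finset.mem_Ici.1 ha)
  · -- μ i ≤ ν (succ i)
    refine key_ge_le hB hC ((Finset.Ici i).image σ) ((Finset.Iic (Fin.succ i)).image τ)
      ?_ _ _ ?_ ?_
    · rw [Finset.card_image_of_injective _ σ.injective,
        Finset.card_image_of_injective _ τ.injective, Fin.card_Ici, Fin.card_Iic]
      have := i.isLt
      simp only [Fin.val_succ]
      omega
    · intro j hj
      obtain ⟨a, ha, rfl⟩ := Finset.mem_image.1 hj
      rw [hμ' a]
      exact hμmono (Finset.mem_Ici.1 ha)
    · intro j hj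
      obtain ⟨a, ha, rfl⟩ := Finset.mem_image.1 hj
      rw [hν' a]
      exact hνmono (Finset.mem_Iic.1 ha)
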